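/- Let c ∈ ℝ, h > 0 and ω ∈ ℝ, set θ = hω, and assume c · sin(θ/4) · cos(θ/4) ≠ 0. Define r₁ = i(Ω(θ) + Δ(θ))/(16c sin(θ/4) cos⁵(θ/4)) and r₂ = i(Ω(θ) − Δ(θ))/(16c sin(θ/4) cos⁵(θ/4)). Then for k = 1, 2 the pair (Q̂ₖ(θ), rₖ) solves the eigenvector system μ₁(ω) − σ₁(ω) rₖ = Q̂ₖ(θ)(1 − rₖ) and μ₂(ω) + σ₂(ω) rₖ = Q̂ₖ(θ)(1 + rₖ). -/
import Mathlib
set_option maxHeartbeats 2000000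


open Complex

/-- The symbol `μ₁(ω)`. -/
noncomputable def mu1 (c h ω : ℝ) : ℂ :=
  (8/(3*(h:ℂ)^2)) *
    (-(Real.sin (h*ω/4) : ℂ)^2 * (7 - (Real.cos (h*ω/2) : ℂ))
      - 4*I*(c:ℂ)*Complex.exp (I*(h*ω/4)) * (Real.sin (h*ω/4) : ℂ)^5)

/-- The symbol `μ₂(ω)`. -/
noncomputable def mu2 (c h ω : ℝ) : ℂ :=
  (8/(3*(h:ℂ)^2)) *
    (-(Real.sin (h*ω/4) : ℂ)^2 * (7 - (Real.cos (h*ω/2) : ℂ))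
      + 4*I*(c:ℂ)*Complex.exp (-I*(h*ω/4)) * (Real.sin (h*ω/4) : ℂ)^5)

/-- The symbol `σ₁(ω)`. -/
noncomputable def sigma1 (c h ω : ℝ) : ℂ :=
  (8/(3*(h:ℂ)^2)) *
    (-(Real.cos (h*ω/4) : ℂ)^2 * (7 + (Real.cos (h*ω/2) : ℂ))
      + 4*(c:ℂ)*Complex.exp (I*(h*ω/4)) * (Real.cos (h*ω/4) : ℂ)^5)

/-- The symbol `σ₂(ω)`. -/
noncomputable def sigma2 (c h ω : ℝ) : ℂ :=
  (8/(3*(h:ℂ)^2)) *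
    (-(Real.cos (h*ω/4) : ℂ)^2 * (7 + (Real.cos (h*ω/2) : ℂ))
      + 4*(c:ℂ)*Complex.exp (-I*(h*ω/4)) * (Real.cos (h*ω/4) : ℂ)^5)

/-- `Ω(θ) = −cos(θ/2)(16 − (7 + cos θ)c)`. -/
noncomputable def Om (c θ : ℝ) : ℝ :=
  -Real.cos (θ/2) * (16 - (7 + Real.cos θ)*c)

/-- `Δ(θ) = √(Ω(θ)² + 4c² sin⁶(θ/2))`. -/
noncomputable def Del (c θ : ℝ) : ℝ :=
  Real.sqrt ((Om c θ)^2 + 4*c^2*(Real.sin (θ/2))^6)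

/-- The symbol `Q̂₁(θ)`. -/
noncomputable def Qhat1 (c h θ : ℝ) : ℝ :=
  (2/(3*h^2)) * (-(15 + Real.cos θ) + (5 + 3*Real.cos θ)*c + Del c θ)

/-- The symbol `Q̂₂(θ)`. -/
noncomputable def Qhat2 (c h θ : ℝ) : ℝ :=
  (2/(3*h^2)) * (-(15 + Real.cos θ) + (5 + 3*Real.cos θ)*c - Del c θ)

lemma expand₁ (A B Q n M : ℂ) (hM : M ≠ 0) (hkey : A*M - B*n = Q*(M - n)) :
    A - B*(n/M) = Q*(1 - n/M) := by
  field_simp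
  linear_combination hkey

lemma expand₂ (A B Q n M : ℂ) (hM : M ≠ 0) (hkey : A*M + B*n = Q*(M + n)) :
    A + B*(n/M) = Q*(1 + n/M) := by
  field_simp
  linear_combination hkey

/-- For `θ = hω` with `c sin(θ/4) cos(θ/4) ≠ 0`, the pairs `(Q̂ₖ(θ), rₖ)`,
`k = 1,2`, solve the eigenvector system
`μ₁(ω) − σ₁(ω) rₖ = Q̂ₖ(θ)(1 − rₖ)` and `μ₂(ω) + σ₂(ω) rₖ = Q̂ₖ(θ)(1 + rₖ)`. -/
theorem eigvector_system (c h ω : ℝ) (hh : 0 < h) (θ : ℝ) (hθ : θ = h*ω)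
    (hne : c * Real.sin (θ/4) * Real.cos (θ/4) ≠ 0) :
    (let r1 : ℂ := I * ((Om c θ + Del c θ : ℝ) : ℂ) /
        ((16*c*Real.sin (θ/4)*(Real.cos (θ/4))^5 : ℝ) : ℂ)
     mu1 c h ω - sigma1 c h ω * r1 = (Qhat1 c h θ : ℂ) * (1 - r1) ∧
     mu2 c h ω + sigma2 c h ω * r1 = (Qhat1 c h θ : ℂ) * (1 + r1)) ∧
    (let r2 : ℂ := I * ((Om c θ - Del c θ : ℝ) : ℂ) /
        ((16*c*Real.sin (θ/4)*(Real.cos (θ/4))^5 : ℝ) : ℂ)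
     mu1 c h ω - sigma1 c h ω * r2 = (Qhat2 c h θ : ℂ) * (1 - r2) ∧
     mu2 c h ω + sigma2 c h ω * r2 = (Qhat2 c h θ : ℂ) * (1 + r2)) := by
  subst hθ
  have hc : c ≠ 0 := fun H => hne (by rw [H]; ring)
  have hs : Real.sin (h*ω/4) ≠ 0 := fun H => hne (by rw [H]; ring)
  have hco : Real.cos (h*ω/4) ≠ 0 := fun H => hne (by rw [H]; ring)
  have hhn : (h:ℝ) ≠ 0 := ne_of_gt hh
  have hcos2 : Real.cos (h*ω/2) = 2*(Real.cos (h*ω/4))^2 - 1 := by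
    have := Real.cos_two_mul (h*ω/4); rw [show 2*(h*ω/4) = h*ω/2 by ring] at this
    exact this
  have hcos1 : Real.cos (h*ω) = 2*(2*(Real.cos (h*ω/4))^2 - 1)^2 - 1 := by
    have := Real.cos_two_mul (h*ω/2); rw [show 2*(h*ω/2) = h*ω by ring] at this
    rw [this, hcos2]
  have hsin2 : Real.sin (h*ω/2) = 2*Real.sin (h*ω/4)*Real.cos (h*ω/4) := by
    have := Real.sin_two_mul (h*ω/4); rw [show 2*(h*ω/4) = h*ω/2 by ring] at this
    exact this
  have hD2 : (Del c (h*ω))^2 = ((2*(Real.cos (h*ω/4))^2-1)*(16-(7+(2*(2*(Real.cos (h*ω/4))^2-1)^2-1))*c))^2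
      + 4*c^2*(2*Real.sin (h*ω/4)*Real.cos (h*ω/4))^6 := by
    rw [Del, Real.sq_sqrt (by positivity), Om, hcos1, hcos2, hsin2]; ring
  have hE : Complex.exp (I*((h:ℂ)*ω/4)) = (Real.cos (h*ω/4):ℂ) + (Real.sin (h*ω/4):ℂ)*I := by
    rw [show (I*((h:ℂ)*ω/4)) = ((h*ω/4 : ℝ):ℂ)*I by push_cast; ring, Complex.exp_mul_I,
      ← Complex.ofReal_cos, ← Complex.ofReal_sin]
  have hF : Complex.exp (-I*((h:ℂ)*ω/4)) = (Real.cos (h*ω/4):ℂ) - (Real.sin (h*ω/4):ℂ)*I := by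
    rw [show (-I*((h:ℂ)*ω/4)) = ((-(h*ω/4) : ℝ):ℂ)*I by push_cast; ring, Complex.exp_mul_I,
      ← Complex.ofReal_cos, ← Complex.ofReal_sin, Real.cos_neg, Real.sin_neg]
    push_cast; ring
  have hD2C : ((Del c (h*ω):ℝ):ℂ)^2 = (((2*((Real.cos (h*ω/4):ℂ))^2-1)*(16-(7+(2*(2*((Real.cos (h*ω/4):ℂ))^2-1)^2-1))*(c:ℂ)))^2
      + 4*(c:ℂ)^2*(2*(Real.sin (h*ω/4):ℂ)*(Real.cos (h*ω/4):ℂ))^6) := by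
    have := congrArg (fun x : ℝ => (x:ℂ)) hD2
    simpa only [Complex.ofReal_mul, Complex.ofReal_div, Complex.ofReal_add, Complex.ofReal_sub,
      Complex.ofReal_neg, Complex.ofReal_pow, Complex.ofReal_ofNat, Complex.ofReal_one] using this
  have hsc : ((Real.sin (h*ω/4):ℂ))^2 + ((Real.cos (h*ω/4):ℂ))^2 = 1 := by
    exact_mod_cast congrArg (fun x : ℝ => (x:ℂ)) (Real.sin_sq_add_cos_sq (h*ω/4))
  have hsC : ((Real.sin (h*ω/4):ℝ):ℂ) ≠ 0 := Complex.ofReal_ne_zero.2 hs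
  have hcoC : ((Real.cos (h*ω/4):ℝ):ℂ) ≠ 0 := Complex.ofReal_ne_zero.2 hco
  have hcC : ((c:ℝ):ℂ) ≠ 0 := Complex.ofReal_ne_zero.2 hc
  have hhC : ((h:ℝ):ℂ) ≠ 0 := Complex.ofReal_ne_zero.2 hhn
  have hI : (I:ℂ)^2 = -1 := Complex.I_sq
  have hM : ((16*c*Real.sin (h*ω/4)*(Real.cos (h*ω/4))^5 : ℝ):ℂ) ≠ 0 :=
    Complex.ofReal_ne_zero.2
      (mul_ne_zero (mul_ne_zero (mul_ne_zero (by norm_num) hc) hs) (pow_ne_zero 5 hco))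
  refine ⟨⟨?_, ?_⟩, ?_, ?_⟩
  · refine expand₁ _ _ _ _ _ hM ?_
    simp only [mu1, mu2, sigma1, sigma2, Qhat1, Qhat2, Om, hE, hF, hcos1, hcos2,
      Complex.ofReal_mul, Complex.ofReal_div, Complex.ofReal_add, Complex.ofReal_sub,
      Complex.ofReal_neg, Complex.ofReal_pow, Complex.ofReal_ofNat, Complex.ofReal_one]
    set S : ℂ := ((Real.sin (h*ω/4):ℝ):ℂ) with hSdef
    set Co : ℂ := ((Real.cos (h*ω/4):ℝ):ℂ) with hCodef
    set D : ℂ := ((Del c (h*ω):ℝ):ℂ) with hDdef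
    set C : ℂ := ((c:ℝ):ℂ) with hCdef
    set H : ℂ := ((h:ℝ):ℂ) with hHdef
    linear_combination (((-1024)*S*Co^5*C + (-512)*S*Co^5*C^2*Complex.I^2 + (256)*S*Co^7*C + (1024)*S*Co^7*C^2*Complex.I^2 + (-512)*S*Co^9*C^2*Complex.I^2 + (-512)*S^3*Co^5*C^2*Complex.I^2 + (512)*S^3*Co^7*C^2*Complex.I^2 + (-512)*S^5*Co^5*C^2*Complex.I^2)/(3*H^2)) * hsc + (((2)*Complex.I)/(3*H^2)) * hD2C + (((-512)*S*Co^5*C + (-32)*S*Co^5*C*D + (-256)*S*Co^5*C^2 + (1024)*S*Co^7*C + (768)*S*Co^7*C^2 + (-768)*S*Co^9*C^2)/(3*H^2)) * hI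
  · refine expand₂ _ _ _ _ _ hM ?_
    simp only [mu1, mu2, sigma1, sigma2, Qhat1, Qhat2, Om, hE, hF, hcos1, hcos2,
      Complex.ofReal_mul, Complex.ofReal_div, Complex.ofReal_add, Complex.ofReal_sub,
      Complex.ofReal_neg, Complex.ofReal_pow, Complex.ofReal_ofNat, Complex.ofReal_one]
    set S : ℂ := ((Real.sin (h*ω/4):ℝ):ℂ) with hSdef
    set Co : ℂ := ((Real.cos (h*ω/4):ℝ):ℂ) with hCodef
    set D : ℂ := ((Del c (h*ω):ℝ):ℂ) with hDdef
    set C : ℂ := ((c:ℝ):ℂ) with hCdef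
    set H : ℂ := ((h:ℝ):ℂ) with hHdef
    linear_combination (((-1024)*S*Co^5*C + (-512)*S*Co^5*C^2*Complex.I^2 + (256)*S*Co^7*C + (1024)*S*Co^7*C^2*Complex.I^2 + (-512)*S*Co^9*C^2*Complex.I^2 + (-512)*S^3*Co^5*C^2*Complex.I^2 + (512)*S^3*Co^7*C^2*Complex.I^2 + (-512)*S^5*Co^5*C^2*Complex.I^2)/(3*H^2)) * hsc + (((-2)*Complex.I)/(3*H^2)) * hD2C + (((-512)*S*Co^5*C + (-32)*S*Co^5*C*D + (-256)*S*Co^5*C^2 + (1024)*S*Co^7*C + (768)*S*Co^7*C^2 + (-768)*S*Co^9*C^2)/(3*H^2)) * hI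
  · refine expand₁ _ _ _ _ _ hM ?_
    simp only [mu1, mu2, sigma1, sigma2, Qhat1, Qhat2, Om, hE, hF, hcos1, hcos2,
      Complex.ofReal_mul, Complex.ofReal_div, Complex.ofReal_add, Complex.ofReal_sub,
      Complex.ofReal_neg, Complex.ofReal_pow, Complex.ofReal_ofNat, Complex.ofReal_one]
    set S : ℂ := ((Real.sin (h*ω/4):ℝ):ℂ) with hSdef
    set Co : ℂ := ((Real.cos (h*ω/4):ℝ):ℂ) with hCodef
    set D : ℂ := ((Del c (h*ω):ℝ):ℂ) with hDdef
    set C : ℂ := ((c:ℝ):ℂ) with hCdef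
    set H : ℂ := ((h:ℝ):ℂ) with hHdef
    linear_combination (((-1024)*S*Co^5*C + (-512)*S*Co^5*C^2*Complex.I^2 + (256)*S*Co^7*C + (1024)*S*Co^7*C^2*Complex.I^2 + (-512)*S*Co^9*C^2*Complex.I^2 + (-512)*S^3*Co^5*C^2*Complex.I^2 + (512)*S^3*Co^7*C^2*Complex.I^2 + (-512)*S^5*Co^5*C^2*Complex.I^2)/(3*H^2)) * hsc + (((2)*Complex.I)/(3*H^2)) * hD2C + (((-512)*S*Co^5*C + (32)*S*Co^5*C*D + (-256)*S*Co^5*C^2 + (1024)*S*Co^7*C + (768)*S*Co^7*C^2 + (-768)*S*Co^9*C^2)/(3*H^2)) * hI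
  · refine expand₂ _ _ _ _ _ hM ?_
    simp only [mu1, mu2, sigma1, sigma2, Qhat1, Qhat2, Om, hE, hF, hcos1, hcos2,
      Complex.ofReal_mul, Complex.ofReal_div, Complex.ofReal_add, Complex.ofReal_sub,
      Complex.ofReal_neg, Complex.ofReal_pow, Complex.ofReal_ofNat, Complex.ofReal_one]
    set S : ℂ := ((Real.sin (h*ω/4):ℝ):ℂ) with hSdef
    set Co : ℂ := ((Real.cos (h*ω/4):ℝ):ℂ) with hCodef
    set D : ℂ := ((Del c (h*ω):ℝ):ℂ) with hDdef
    set C : ℂ := ((c:ℝ):ℂ) with hCdef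
    set H : ℂ := ((h:ℝ):ℂ) with hHdef
    linear_combination (((-1024)*S*Co^5*C + (-512)*S*Co^5*C^2*Complex.I^2 + (256)*S*Co^7*C + (1024)*S*Co^7*C^2*Complex.I^2 + (-512)*S*Co^9*C^2*Complex.I^2 + (-512)*S^3*Co^5*C^2*Complex.I^2 + (512)*S^3*Co^7*C^2*Complex.I^2 + (-512)*S^5*Co^5*C^2*Complex.I^2)/(3*H^2)) * hsc + (((-2)*Complex.I)/(3*H^2)) * hD2C + (((-512)*S*Co^5*C + (32)*S*Co^5*C*D + (-256)*S*Co^5*C^2 + (1024)*S*Co^7*C + (768)*S*Co^7*C^2 + (-768)*S*Co^9*C^2)/(3*H^2)) * hI
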